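/- arXiv:2406.17820 — 7 statements merged into one kernel-verified Lean document; each statement's English description precedes it below -/
import Mathlib

section
/- If G is a simple graph on n ≥ 3 vertices that contains no doubly chorded cycle (i.e., no cycle with at least two chords), then the number of edges of G is at most 2n - 3. -/
open SimpleGraph

/-- A chord of the cycle `c` in `G`: an edge of `G` whose endpoints lie on `c`
but which is not itself an edge of `c`. -/
def IsChord {V : Type*} (G : SimpleGraph V) {v : V} (c : G.Walk v v) (e : Sym2 V) : Prop :=
  e ∈ G.edgeSet ∧ e ∉ c.edges ∧ ∀ x ∈ e, x ∈ c.support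

/-- `G` contains a doubly chorded cycle: a cycle with at least two chords. -/
def HasDCC {V : Type*} (G : SimpleGraph V) : Prop :=
  ∃ (v : V) (c : G.Walk v v), c.IsCycle ∧
    ∃ e₁ e₂ : Sym2 V, e₁ ≠ e₂ ∧ IsChord G c e₁ ∧ IsChord G c e₂

/-- `G` contains a cycle with two chords incident to a common vertex. -/
def HasDCC1 {V : Type*} (G : SimpleGraph V) : Prop :=
  ∃ (v : V) (c : G.Walk v v), c.IsCycle ∧
    ∃ e₁ e₂ : Sym2 V, e₁ ≠ e₂ ∧ IsChord G c e₁ ∧ IsChord G c e₂ ∧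
      ∃ w : V, w ∈ e₁ ∧ w ∈ e₂

/-! A graph of minimum degree at least 3 contains a cycle with two chords. Take a longest path
`x₀ ⋯ x_L`: every neighbour of `x₀` lies on it, so besides `x₁` it has neighbours `x_b` and `x_c`
with `2 ≤ b < c`. The Pósa rotation `x_{b-1} ⋯ x₀ x_b ⋯ x_L` is again a longest path, so a third
neighbour `x_j` of `x_{b-1}` also lies on the path. If `j ≤ c`, the cycle `x₀ ⋯ x_c x₀` has the chords
`x₀ x_b` and `x_{b-1} x_j`; otherwise the cycle `x_{b-1} ⋯ x₀ x_b ⋯ x_j x_{b-1}` has the chords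
`x₀ x_c` and `x_{b-1} x_b`. Hence a graph without such a cycle has a vertex of degree at most 2,
and deleting it gives `e(G) ≤ 2n - 3` by induction on `n`. -/

open Finset

namespace SimpleGraph

variable {V : Type*}

lemma exists_isPath_forall_length_le [Fintype V] [Nonempty V] (G : SimpleGraph V) :
    ∃ (u v : V) (p : G.Walk u v), p.IsPath ∧
      ∀ (u' v' : V) (q : G.Walk u' v'), q.IsPath → q.length ≤ p.length := by
  let S : Set ℕ := {l | ∃ (u v : V) (p : G.Walk u v), p.IsPath ∧ p.length = l}
  have hS : S.Nonempty := ⟨0, Classical.arbitrary V, _, .nil, .nil, rfl⟩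
  have hbdd : BddAbove S := ⟨Fintype.card V, fun _ ⟨_, _, _, hp, hl⟩ => hl ▸ hp.length_lt.le⟩
  obtain ⟨u, v, p, hp, hl⟩ := Nat.sSup_mem hS hbdd
  exact ⟨u, v, p, hp, fun u' v' q hq => hl ▸ le_csSup hbdd ⟨u', v', q, hq, rfl⟩⟩

lemma exists_adj_ne_ne [Fintype V] {G : SimpleGraph V} [DecidableRel G.Adj] {v : V} (hv : 3 ≤ G.degree v)
    (a b : V) : ∃ t, G.Adj v t ∧ t ≠ a ∧ t ≠ b := by
  classical
  by_contra! hne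
  have hsub : G.neighborFinset v ⊆ {a, b} := fun t ht => by
    have := hne t ((G.mem_neighborFinset v t).1 ht)
    rw [mem_insert, mem_singleton]
    tauto
  have := (card_le_card hsub).trans card_le_two
  rw [card_neighborFinset_eq_degree] at this
  omega

end SimpleGraph

namespace SimpleGraph.Walk

variable {V : Type*} {G : SimpleGraph V} {u v : V} {p : G.Walk u v}

lemma IsPath.getVert_inj (hp : p.IsPath) {i j : ℕ} (hi : i ≤ p.length) (hj : j ≤ p.length) :
    p.getVert i = p.getVert j ↔ i = j :=
  ⟨fun h => hp.getVert_injOn hi hj h, fun h => h ▸ rfl⟩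

lemma IsPath.mk_getVert_mem_edges_iff (hp : p.IsPath) {i j : ℕ} (hi : i ≤ p.length)
    (hj : j ≤ p.length) : s(p.getVert i, p.getVert j) ∈ p.edges ↔ i + 1 = j ∨ j + 1 = i := by
  rw [mk_mem_edges_iff_exists]
  constructor
  · rintro ⟨k, hk, hke⟩
    rcases Sym2.eq_iff.mp hke with ⟨h₁, h₂⟩ | ⟨h₁, h₂⟩
    · have := (hp.getVert_inj (by omega) hi).1 h₁
      have := (hp.getVert_inj (by omega) hj).1 h₂
      omega
    · have := (hp.getVert_inj (by omega) hj).1 h₁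
      have := (hp.getVert_inj (by omega) hi).1 h₂
      omega
  · rintro (rfl | rfl)
    · exact ⟨i, by omega, rfl⟩
    · exact ⟨j, by omega, Sym2.eq_swap⟩

lemma IsPath.isCycle_cons_reverse (hp : p.IsPath) (hlen : 2 ≤ p.length) (h : G.Adj u v) :
    (cons h p.reverse).IsCycle := by
  rw [cons_isCycle_iff, edges_reverse, List.mem_reverse]
  refine ⟨hp.reverse, fun hmem => ?_⟩
  have := hp.mk_getVert_mem_edges_iff (Nat.zero_le _) (le_refl p.length)
  rw [getVert_zero, getVert_length] at this
  have := this.1 hmem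
  omega

lemma IsPath.isChord_cons_reverse (hp : p.IsPath) (h : G.Adj u v) {i j : ℕ} (hij : i + 1 < j)
    (hj : j ≤ p.length) (hend : 0 < i ∨ j < p.length) (hadj : G.Adj (p.getVert i) (p.getVert j)) :
    _root_.IsChord G (cons h p.reverse) s(p.getVert i, p.getVert j) := by
  refine ⟨hadj, ?_, fun x hx => ?_⟩
  · rw [edges_cons, edges_reverse, List.mem_cons, List.mem_reverse,
      hp.mk_getVert_mem_edges_iff (by omega) hj, Sym2.eq_iff,
      hp.getVert_eq_start_iff (i := i) (by omega), hp.getVert_eq_end_iff (i := i) (by omega),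
      hp.getVert_eq_start_iff hj, hp.getVert_eq_end_iff hj]
    omega
  · rcases Sym2.mem_iff.mp hx with rfl | rfl <;> simp [getVert_mem_support]

/-- Pósa rotation of `p = x₀ ⋯ x_L` along the edge `x₀ x_b`: the walk `x_{b-1} ⋯ x₀ x_b ⋯ x_L`. -/
def posaRotation (p : G.Walk u v) (b : ℕ) (h : G.Adj u (p.getVert b)) :
    G.Walk (p.getVert (b - 1)) v :=
  (p.take (b - 1)).reverse.append (cons h (p.drop b))

variable {b : ℕ} {h : G.Adj u (p.getVert b)}

lemma length_posaRotation (hb : 0 < b) (hbL : b ≤ p.length) :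
    (p.posaRotation b h).length = p.length := by
  simp only [posaRotation, length_append, length_reverse, take_length, length_cons, drop_length]
  omega

lemma getVert_posaRotation (hb : 0 < b) (hbL : b ≤ p.length) (i : ℕ) :
    (p.posaRotation b h).getVert i = if i < b then p.getVert (b - 1 - i) else p.getVert i := by
  have hmin : min (b - 1) p.length = b - 1 := by omega
  rw [posaRotation, getVert_append]
  simp only [length_reverse, take_length, getVert_reverse, take_getVert, hmin]
  split_ifs with h₁ h₂ h₂
  · congr 1; omega
  · omega
  · obtain rfl : i = b - 1 := by omega
    simp
  · rw [getVert_cons _ _ (by omega), drop_getVert]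
    congr 1; omega

lemma IsPath.posaRotation (hp : p.IsPath) (hb : 0 < b) (hbL : b ≤ p.length) :
    (p.posaRotation b h).IsPath := by
  rw [← IsPath.getVert_injOn_iff]
  intro i hi j hj hij
  simp only [Set.mem_ofPred_eq, length_posaRotation hb hbL] at hi hj
  rw [getVert_posaRotation hb hbL, getVert_posaRotation hb hbL] at hij
  split_ifs at hij <;> have := (hp.getVert_inj (by omega) (by omega)).1 hij <;> omega

lemma IsPath.hasDCC_of_chords (hp : p.IsPath) {c : ℕ} (hc : c ≤ p.length)
    (h : G.Adj u (p.getVert c)) {i₁ j₁ i₂ j₂ : ℕ}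
    (hij₁ : i₁ + 1 < j₁) (hj₁ : j₁ ≤ c) (hend₁ : 0 < i₁ ∨ j₁ < c)
    (hadj₁ : G.Adj (p.getVert i₁) (p.getVert j₁))
    (hij₂ : i₂ + 1 < j₂) (hj₂ : j₂ ≤ c) (hend₂ : 0 < i₂ ∨ j₂ < c)
    (hadj₂ : G.Adj (p.getVert i₂) (p.getVert j₂)) (hne : i₁ ≠ i₂ ∨ j₁ ≠ j₂) : HasDCC G := by
  have hq : (p.take c).IsPath := hp.take c
  have hql : (p.take c).length = c := by simp only [take_length]; omega
  have hqv : ∀ i ≤ c, (p.take c).getVert i = p.getVert i := fun i hi => by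
    rw [take_getVert, min_eq_right hi]
  have chord : ∀ {i j}, i + 1 < j → j ≤ c → (0 < i ∨ j < c) →
      G.Adj (p.getVert i) (p.getVert j) →
      _root_.IsChord G (cons h (p.take c).reverse) s(p.getVert i, p.getVert j) := by
    intro i j hij hj hend hadj
    rw [← hqv i (by omega), ← hqv j hj] at hadj ⊢
    exact hq.isChord_cons_reverse h hij (by omega) (by omega) hadj
  refine ⟨u, _, hq.isCycle_cons_reverse (by omega) h, _, _, fun he => ?_,
    chord hij₁ hj₁ hend₁ hadj₁, chord hij₂ hj₂ hend₂ hadj₂⟩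
  rcases Sym2.eq_iff.mp he with ⟨h₁, h₂⟩ | ⟨h₁, h₂⟩
  · have := (hp.getVert_inj (by omega) (by omega)).1 h₁
    have := (hp.getVert_inj (by omega) (by omega)).1 h₂
    omega
  · have := (hp.getVert_inj (by omega) (by omega)).1 h₁
    have := (hp.getVert_inj (by omega) (by omega)).1 h₂
    omega

lemma IsPath.exists_getVert_eq_of_adj (hp : p.IsPath)
    (hmax : ∀ (w : V) (q : G.Walk w v), q.IsPath → q.length ≤ p.length) {z : V}
    (hz : G.Adj u z) : ∃ i, 0 < i ∧ i ≤ p.length ∧ p.getVert i = z := by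
  have hzp : z ∈ p.support := by
    by_contra hzp
    have := hmax z (cons hz.symm p) (hp.cons hzp)
    rw [length_cons] at this
    omega
  obtain ⟨i, rfl, hi⟩ := mem_support_iff_exists_getVert.mp hzp
  refine ⟨i, Nat.pos_of_ne_zero fun hi0 => ?_, hi, rfl⟩
  rw [hi0, getVert_zero] at hz
  exact hz.ne rfl

lemma IsPath.exists_adj_getVert_ne [Fintype V] [DecidableRel G.Adj] (hp : p.IsPath)
    (hmax : ∀ (w : V) (q : G.Walk w v), q.IsPath → q.length ≤ p.length)
    (hu : 3 ≤ G.degree u) (a : V) :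
    ∃ j, 2 ≤ j ∧ j ≤ p.length ∧ p.getVert j ≠ a ∧ G.Adj u (p.getVert j) := by
  obtain ⟨t, hut, ht₁, hta⟩ := exists_adj_ne_ne hu (p.getVert 1) a
  obtain ⟨j, hj0, hjL, rfl⟩ := hp.exists_getVert_eq_of_adj hmax hut
  have hj1 : j ≠ 1 := by rintro rfl; exact ht₁ rfl
  exact ⟨j, by omega, hjL, hta, hut⟩

lemma IsPath.exists_lt_adj_getVert_adj_getVert [Fintype V] [DecidableRel G.Adj]
    (hp : p.IsPath) (hmax : ∀ (w : V) (q : G.Walk w v), q.IsPath → q.length ≤ p.length)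
    (hu : 3 ≤ G.degree u) :
    ∃ b c, 2 ≤ b ∧ b < c ∧ c ≤ p.length ∧ G.Adj u (p.getVert b) ∧ G.Adj u (p.getVert c) := by
  obtain ⟨i, hi2, hiL, -, hui⟩ := hp.exists_adj_getVert_ne hmax hu u
  obtain ⟨k, hk2, hkL, hki, huk⟩ := hp.exists_adj_getVert_ne hmax hu (p.getVert i)
  rcases lt_or_gt_of_ne fun hik : i = k => hki (hik ▸ rfl) with h | h
  · exact ⟨i, k, hi2, h, hkL, hui, huk⟩
  · exact ⟨k, i, hk2, h, hiL, huk, hui⟩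

end SimpleGraph.Walk

namespace SimpleGraph

variable {V : Type*} {G : SimpleGraph V}

theorem hasDCC_of_three_le_minDegree [Fintype V] [DecidableRel G.Adj] (hδ : 3 ≤ G.minDegree) :
    HasDCC G := by
  have hdeg : ∀ v, 3 ≤ G.degree v := fun v => hδ.trans (G.minDegree_le_degree v)
  cases isEmpty_or_nonempty V
  · simp at hδ
  obtain ⟨u, w, p, hp, hmax⟩ := G.exists_isPath_forall_length_le
  obtain ⟨b, c, hb, hbc, hcL, hub, huc⟩ :=
    hp.exists_lt_adj_getVert_adj_getVert (fun _ q hq => hmax _ _ q hq) (hdeg u)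
  set q := p.posaRotation b hub
  have hq : q.IsPath := hp.posaRotation (by omega) (by omega)
  have hql : q.length = p.length := Walk.length_posaRotation (by omega) (by omega)
  have hqv : ∀ i, q.getVert i = if i < b then p.getVert (b - 1 - i) else p.getVert i :=
    Walk.getVert_posaRotation (by omega) (by omega)
  obtain ⟨j, hj2, hjL, hjb, hxt⟩ := hq.exists_adj_getVert_ne
    (fun _ q' hq' => hql ▸ hmax _ _ q' hq') (hdeg (p.getVert (b - 1))) (p.getVert b)
  replace hjb : j ≠ b := fun h => hjb (by rw [h, hqv, if_neg (lt_irrefl b)])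
  have hu : p.getVert 0 = u := p.getVert_zero
  rcases lt_or_ge c j with hcj | hjc
  · have hq₁ : G.Adj (q.getVert (b - 1)) (q.getVert c) := by
      rwa [hqv, hqv, if_pos (by omega), if_neg (by omega), Nat.sub_self, hu]
    have hq₂ : G.Adj (q.getVert 0) (q.getVert b) := by
      rw [hqv, hqv, if_pos (by omega), if_neg (lt_irrefl b), Nat.sub_zero]
      simpa [show b - 1 + 1 = b by omega] using p.adj_getVert_succ (i := b - 1) (by omega)
    exact hq.hasDCC_of_chords (by omega) hxt (i₁ := b - 1) (j₁ := c) (i₂ := 0) (j₂ := b)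
      (by omega) (by omega) (by omega) hq₁ (by omega) (by omega) (by omega) hq₂ (by omega)
  rcases lt_or_gt_of_ne hjb with hjb | hjb
  · rw [hqv, if_pos hjb] at hxt
    exact hp.hasDCC_of_chords hcL huc (i₁ := 0) (j₁ := b) (i₂ := b - 1 - j) (j₂ := b - 1)
      (by omega) (by omega) (by omega) (by rwa [hu]) (by omega) (by omega) (by omega) hxt.symm
      (by omega)
  · rw [hqv, if_neg (by omega)] at hxt
    exact hp.hasDCC_of_chords hcL huc (i₁ := 0) (j₁ := b) (i₂ := b - 1) (j₂ := j)
      (by omega) (by omega) (by omega) (by rwa [hu]) (by omega) hjc (by omega) hxt (by omega)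

end SimpleGraph

section Embedding

variable {V W : Type*} {G : SimpleGraph V} {G' : SimpleGraph W}

lemma IsChord.map (f : G ↪g G') {v : V} {c : G.Walk v v} {e : Sym2 V} (h : IsChord G c e) :
    IsChord G' (c.map f.toHom) (e.map f) := by
  obtain ⟨he, hec, hes⟩ := h
  refine ⟨f.map_mem_edgeSet_iff.2 he, ?_, ?_⟩
  · rw [Walk.edges_map]
    exact fun hmem => hec ((List.mem_map_of_injective (Sym2.map.injective f.injective)).1 hmem)
  · intro x hx
    obtain ⟨y, hy, rfl⟩ := Sym2.mem_map.1 hx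
    rw [Walk.support_map]
    exact List.mem_map_of_mem (hes y hy)

lemma HasDCC.map (f : G ↪g G') (h : HasDCC G) : HasDCC G' := by
  obtain ⟨v, c, hc, e₁, e₂, hne, h₁, h₂⟩ := h
  exact ⟨f v, c.map f.toHom, hc.map f.injective, e₁.map f, e₂.map f,
    fun he => hne (Sym2.map.injective f.injective he), h₁.map f, h₂.map f⟩

end Embedding

namespace SimpleGraph

variable {V : Type*} [Fintype V] [DecidableEq V] {G : SimpleGraph V} [DecidableRel G.Adj]

lemma card_edgeFinset_induce_compl_singleton_add_degree (v : V) :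
    #(G.induce {v}ᶜ).edgeFinset + G.degree v = #G.edgeFinset := by
  have hle : G.degree v ≤ #G.edgeFinset := by
    rw [← card_incidenceFinset_eq_degree]
    exact card_le_card (G.incidenceFinset_subset v)
  rw [card_edgeFinset_induce_compl_singleton, card_edgeFinset_deleteIncidenceSet]
  omega

theorem card_edgeFinset_add_three_le_of_not_hasDCC (hG : ¬ HasDCC G)
    (hV : 2 ≤ Fintype.card V) : #G.edgeFinset + 3 ≤ 2 * Fintype.card V := by
  induction hn : Fintype.card V generalizing V with
  | zero => omega
  | succ n ih =>
    obtain rfl | hn2 : n = 1 ∨ 2 ≤ n := by omega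
    · have := G.card_edgeFinset_le_card_choose_two
      simp only [hn, Nat.reduceAdd, Nat.choose_self] at this
      omega
    have : Nonempty V := Fintype.card_pos_iff.mp (by omega)
    obtain ⟨v, hv⟩ := G.exists_minimal_degree_vertex
    have hv2 : G.degree v ≤ 2 := by
      by_contra! h3
      exact hG (hasDCC_of_three_le_minDegree (hv ▸ h3))
    have hcard : Fintype.card ↥({v}ᶜ : Set V) = n := by
      rw [Fintype.card_compl_set, Set.card_singleton, hn, Nat.add_sub_cancel]
    have := ih (G := G.induce {v}ᶜ) (fun h => hG (h.map (Embedding.induce _))) (by omega) hcard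
    have := G.card_edgeFinset_induce_compl_singleton_add_degree v
    omega

end SimpleGraph

theorem no_dcc_edge_bound (n : ℕ) (hn : 3 ≤ n) (G : SimpleGraph (Fin n))
    (h : ¬ HasDCC G) : Nat.card G.edgeSet ≤ 2 * n - 3 := by
  classical
  have := card_edgeFinset_add_three_le_of_not_hasDCC h (by rw [Fintype.card_fin]; omega)
  rw [Fintype.card_fin] at this
  rw [Nat.card_eq_fintype_card, ← edgeFinset_card]
  omega
end

section
/- The complete tripartite graph K_{1,1,n-2} on n vertices contains no doubly chorded cycle, and it has exactly 2n - 3 edges. -/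
open SimpleGraph

/-- The complete tripartite graph `K_{1,1,n-2}` on `Fin n`: vertices `0` and `1` are the
two singleton parts, the other `n-2` vertices form an independent set. -/
def K11 (n : ℕ) : SimpleGraph (Fin n) where
  Adj v w := v ≠ w ∧ (v.val < 2 ∨ w.val < 2)
  symm := ⟨by intro v w h; exact ⟨h.1.symm, h.2.symm⟩⟩
  loopless := ⟨fun v h => h.1 rfl⟩

open Finset

/-!
A vertex of degree at most two on a cycle has all of its edges on the cycle, so both endpoints
of a chord have degree at least three. In `K_{1,1,n-2}` only the two singleton parts have degree
more than two, so the edge joining them is the only possible chord. The edge count is half the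
degree sum `2 (n - 1) + 2 (n - 2)`.
-/

theorem SimpleGraph.Walk.IsCycle.mk_mem_edges_of_degree_le_two {V : Type*} {G : SimpleGraph V}
    {u x y : V} {c : G.Walk u u} (hc : c.IsCycle) (hx : x ∈ c.support)
    [Fintype (G.neighborSet x)] (hdeg : G.degree x ≤ 2) (hxy : G.Adj x y) :
    s(x, y) ∈ c.edges := by
  have hcycle : c.toSubgraph.neighborSet x = G.neighborSet x := by
    refine Set.eq_of_subset_of_ncard_le (c.toSubgraph.neighborSet_subset x) ?_ (Set.toFinite _)
    rwa [hc.ncard_neighborSet_toSubgraph_eq_two hx, Set.ncard_eq_toFinset_card',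
      ← neighborFinset_def]
  rw [← c.mem_edges_toSubgraph, Subgraph.mem_edgeSet, ← Subgraph.mem_neighborSet, hcycle]
  exact hxy

theorem IsChord.two_lt_degree {V : Type*} {G : SimpleGraph V} [G.LocallyFinite] {u x : V}
    {c : G.Walk u u} (hc : c.IsCycle) {e : Sym2 V} (he : IsChord G c e) (hxe : x ∈ e) :
    2 < G.degree x := by
  obtain ⟨hadj, hnot, hsupp⟩ := he
  obtain ⟨y, rfl⟩ := Sym2.mem_iff_exists.mp hxe
  by_contra! hdeg
  exact hnot (hc.mk_mem_edges_of_degree_le_two (hsupp x hxe) hdeg hadj)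

theorem IsChord.eq_of_degree_le_two {V : Type*} {G : SimpleGraph V} [G.LocallyFinite]
    {u : V} {c : G.Walk u u} (hc : c.IsCycle) {a b : V}
    (hdeg : ∀ v, v ≠ a → v ≠ b → G.degree v ≤ 2) {e : Sym2 V} (he : IsChord G c e) :
    e = s(a, b) := by
  have hab : ∀ x ∈ e, x = a ∨ x = b := fun x hx => by
    by_contra! h
    exact (hdeg x h.1 h.2).not_gt (he.two_lt_degree hc hx)
  induction e using Sym2.ind with
  | h x y =>
    have hxy : x ≠ y := he.1.ne
    rcases hab x (Sym2.mem_mk_left x y) with rfl | rfl <;>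
      rcases hab y (Sym2.mem_mk_right _ y) with rfl | rfl <;> simp_all [Sym2.eq_swap]

theorem not_hasDCC_of_degree_le_two {V : Type*} {G : SimpleGraph V} [G.LocallyFinite] (a b : V)
    (hdeg : ∀ v, v ≠ a → v ≠ b → G.degree v ≤ 2) : ¬ HasDCC G := by
  rintro ⟨u, c, hc, e₁, e₂, hne, he₁, he₂⟩
  exact hne ((he₁.eq_of_degree_le_two hc hdeg).trans (he₂.eq_of_degree_le_two hc hdeg).symm)

namespace K11

instance (n : ℕ) : DecidableRel (K11 n).Adj := fun v w =>
  inferInstanceAs (Decidable (v ≠ w ∧ (v.val < 2 ∨ w.val < 2)))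

@[simp]
theorem adj {n : ℕ} {v w : Fin n} : (K11 n).Adj v w ↔ v ≠ w ∧ (v.val < 2 ∨ w.val < 2) :=
  Iff.rfl

theorem degree_of_lt_two {n : ℕ} {v : Fin n} (hv : v.val < 2) : (K11 n).degree v = n - 1 := by
  have : (K11 n).neighborFinset v = univ.erase v := by
    ext w
    simp [mem_neighborFinset, hv, eq_comm]
  rw [← card_neighborFinset_eq_degree, this, card_erase_of_mem (mem_univ v)]
  simp

theorem degree_of_two_le {n : ℕ} {v : Fin n} (hv : 2 ≤ v.val) : (K11 n).degree v = 2 := by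
  have : (K11 n).neighborFinset v = ({w | w.val < 2} : Finset (Fin n)) := by
    ext w
    simp only [mem_neighborFinset, adj, mem_filter_univ]
    constructor
    · rintro ⟨-, h⟩; omega
    · intro h; exact ⟨fun hvw => by omega, Or.inr h⟩
  rw [← card_neighborFinset_eq_degree, this, Fin.card_filter_val_lt]
  omega

theorem not_hasDCC (n : ℕ) : ¬ HasDCC (K11 n) := by
  rcases lt_or_ge n 2 with hn | hn
  · rintro ⟨-, -, -, e, -, -, ⟨he, -⟩, -⟩
    induction e using Sym2.ind with
    | h x y => exact he.1 (Fin.ext (by have := x.isLt; have := y.isLt; omega))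
  · refine not_hasDCC_of_degree_le_two ⟨0, by omega⟩ ⟨1, by omega⟩ fun v h0 h1 => ?_
    have hv0 : v.val ≠ 0 := fun h => h0 (Fin.ext h)
    have hv1 : v.val ≠ 1 := fun h => h1 (Fin.ext h)
    exact (degree_of_two_le (by omega)).le

theorem sum_degrees (n : ℕ) :
    ∑ v, (K11 n).degree v = min n 2 * (n - 1) + (n - min n 2) * 2 := by
  have hdeg : ∀ v : Fin n, (K11 n).degree v = if v.val < 2 then n - 1 else 2 := fun v => by
    split_ifs with hv
    · exact degree_of_lt_two hv
    · exact degree_of_two_le (not_lt.mp hv)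
  have hlarge : #{v : Fin n | ¬ v.val < 2} = n - min n 2 := by
    have := card_filter_add_card_filter_not (s := univ) (fun v : Fin n => v.val < 2)
    rw [Fin.card_filter_val_lt, card_univ, Fintype.card_fin] at this
    omega
  simp only [hdeg, sum_ite, sum_const, smul_eq_mul, Fin.card_filter_val_lt, hlarge]

theorem card_edgeSet (n : ℕ) : Nat.card (K11 n).edgeSet = 2 * n - 3 := by
  have := (K11 n).sum_degrees_eq_twice_card_edges
  rw [sum_degrees] at this
  rw [Nat.card_eq_fintype_card, ← edgeFinset_card]
  rcases le_or_gt n 2 with hn | hn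
  · interval_cases n <;> omega
  · rw [min_eq_right hn.le] at this
    omega

end K11

theorem K11_no_dcc_and_card_general (n : ℕ) :
    ¬ HasDCC (K11 n) ∧ Nat.card (K11 n).edgeSet = 2 * n - 3 :=
  ⟨K11.not_hasDCC n, K11.card_edgeSet n⟩

theorem K11_no_dcc_and_card (n : ℕ) (hn : 3 ≤ n) :
    ¬ HasDCC (K11 n) ∧ Nat.card (K11 n).edgeSet = 2 * n - 3 :=
  K11_no_dcc_and_card_general n
end

section
/- The complete bipartite graph K_{3,n-3} contains no cycle with two chords incident to a common vertex. -/
/-!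
A vertex `w` of a cycle carrying two chords has four distinct neighbours on the cycle: its two
cycle neighbours and the far ends of the two chords. In a bipartite graph they all lie in the
colour class opposite to `w`, and a closed walk alternates between the classes, so it visits both
equally often. In `K_{3,n-3}` a cycle visits the class `{0, 1, 2}` at most three times.
-/

open SimpleGraph

/-- The complete bipartite graph `K_{3,n-3}` on `Fin n`, with parts `{0,1,2}` and the rest. -/
def K31 (n : ℕ) : SimpleGraph (Fin n) where
  Adj v w := (v.val < 3) ≠ (w.val < 3)
  symm := ⟨by intro v w h; exact h.symm⟩
  loopless := ⟨fun v h => h rfl⟩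

open Finset

namespace SimpleGraph

variable {V : Type*} {G : SimpleGraph V}

theorem Walk.mem_support_tail_of_mem_support {v z : V} {c : G.Walk v v} (hc : ¬c.Nil)
    (hz : z ∈ c.support) : z ∈ c.support.tail := by
  rcases (c.mem_support_iff).mp hz with rfl | h
  · exact Walk.end_mem_tail_support hc
  · exact h

theorem Walk.IsCycle.four_le_countP_adj [DecidableEq V] [DecidableRel G.Adj] {v w : V}
    {c : G.Walk v v} (hc : c.IsCycle) {e₁ e₂ : Sym2 V} (hne : e₁ ≠ e₂) (h₁ : _root_.IsChord G c e₁)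
    (h₂ : _root_.IsChord G c e₂) (hw₁ : w ∈ e₁) (hw₂ : w ∈ e₂) :
    4 ≤ c.support.tail.countP (G.Adj w ·) := by
  obtain ⟨x, rfl⟩ := Sym2.mem_iff_exists.mp hw₁
  obtain ⟨y, rfl⟩ := Sym2.mem_iff_exists.mp hw₂
  obtain ⟨hwx, hx_edges, hx_supp⟩ := h₁
  obtain ⟨hwy, hy_edges, hy_supp⟩ := h₂
  have hw : w ∈ c.support := hx_supp w (Sym2.mem_mk_left w x)
  set c' := c.rotate w hw
  have hc' : c'.IsCycle := hc.rotate hw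
  have hedges (e : Sym2 V) : e ∈ c'.edges ↔ e ∈ c.edges := (c.rotate_edges w hw).mem_iff
  set a := c'.snd
  set b := c'.penultimate
  have ha : s(w, a) ∈ c.edges := (hedges _).1 (c'.mk_start_snd_mem_edges hc'.not_nil)
  have hb : s(w, b) ∈ c.edges :=
    Sym2.eq_swap ▸ (hedges _).1 (c'.mk_penultimate_end_mem_edges hc'.not_nil)
  have hab : a ≠ b := hc'.snd_ne_penultimate
  have hxy : x ≠ y := by rintro rfl; exact hne rfl
  have hxa : x ≠ a := by rintro rfl; exact hx_edges ha
  have hxb : x ≠ b := by rintro rfl; exact hx_edges hb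
  have hya : y ≠ a := by rintro rfl; exact hy_edges ha
  have hyb : y ≠ b := by rintro rfl; exact hy_edges hb
  have htail : ∀ z ∈ c.support, z ∈ c.support.tail :=
    fun _ => Walk.mem_support_tail_of_mem_support hc.not_nil
  calc 4 = #{x, y, a, b} := by simp [*]
    _ ≤ #{z ∈ c.support.tail.toFinset | G.Adj w z} := by
      refine card_le_card fun z hz => ?_
      simp only [mem_insert, mem_singleton] at hz
      rw [mem_filter, List.mem_toFinset]
      rcases hz with rfl | rfl | rfl | rfl
      · exact ⟨htail _ (hx_supp _ (Sym2.mem_mk_right _ _)), hwx⟩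
      · exact ⟨htail _ (hy_supp _ (Sym2.mem_mk_right _ _)), hwy⟩
      · exact ⟨htail _ (c.snd_mem_support_of_mem_edges ha), c.adj_of_mem_edges ha⟩
      · exact ⟨htail _ (c.snd_mem_support_of_mem_edges hb), c.adj_of_mem_edges hb⟩
    _ = _ := hc.support_nodup.card_eq_countP

section Bipartite

variable (C : G.Coloring Bool)

theorem Walk.countP_support_tail_add_toNat {u v : V} (p : G.Walk u v) :
    p.support.tail.countP C + (C u).toNat =
      p.support.tail.countP (fun z => !C z) + (C v).toNat := by
  induction p with
  | nil => simp
  | @cons u w v h q ih =>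
    have hC : C u ≠ C w := C.valid h
    rw [Walk.support_cons, List.tail_cons, ← q.cons_tail_support, List.countP_cons,
      List.countP_cons]
    cases hu : C u <;> cases hw : C w <;> simp_all; omega

theorem Walk.countP_support_tail_eq_of_closed {v : V} (c : G.Walk v v) :
    c.support.tail.countP C = c.support.tail.countP (fun z => !C z) := by
  simpa using c.countP_support_tail_add_toNat C

theorem Walk.countP_adj_le_countP_coloring [DecidableRel G.Adj] {v : V} (c : G.Walk v v)
    (w : V) : c.support.tail.countP (G.Adj w ·) ≤ c.support.tail.countP C := by
  cases hw : C w
  · refine List.countP_mono_left fun z _ hz => ?_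
    have := C.valid (of_decide_eq_true hz)
    simp_all
  · rw [c.countP_support_tail_eq_of_closed C]
    refine List.countP_mono_left fun z _ hz => ?_
    have := C.valid (of_decide_eq_true hz)
    simp_all

end Bipartite

end SimpleGraph

def K31.coloring (n : ℕ) : (K31 n).Coloring Bool :=
  Coloring.mk (fun z => decide (z.val < 3)) fun h => by simpa [K31] using h

theorem K31.countP_coloring_le {n : ℕ} {l : List (Fin n)} (hl : l.Nodup) :
    l.countP (K31.coloring n) ≤ 3 := by
  calc l.countP (K31.coloring n) = #{z ∈ l.toFinset | z.val < 3} := hl.card_eq_countP.symm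
    _ ≤ #{z : Fin n | z.val < 3} := card_le_card (filter_subset_filter _ (subset_univ _))
    _ ≤ 3 := Fin.card_filter_val_lt ▸ min_le_right n 3

theorem K31_no_dcc1_general (n : ℕ) : ¬ HasDCC1 (K31 n) := by
  rintro ⟨v, c, hc, e₁, e₂, hne, h₁, h₂, w, hw₁, hw₂⟩
  classical
  have h_four := hc.four_le_countP_adj hne h₁ h₂ hw₁ hw₂
  have h_color := c.countP_adj_le_countP_coloring (K31.coloring n) w
  have h_three := K31.countP_coloring_le hc.support_nodup
  omega

theorem K31_no_dcc1 (n : ℕ) (hn : 3 ≤ n) : ¬ HasDCC1 (K31 n) :=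
  K31_no_dcc1_general n
end

section
/- The spectral radius of the graph K_1 ∨ rK_3 (the join of a single vertex with r disjoint triangles), which has n = 3r+1 vertices, equals 1 + sqrt(n). -/
/-!
Put `s = √(3r+1)`. The vector `w` with `w₀ = s - 1` at the centre and `1` on the triangles is a
positive eigenvector of the adjacency matrix for `1 + s`: the centre sees `3r = (s + 1)(s - 1)`,
a triangle vertex sees `(s - 1) + 2`. For an entrywise nonnegative matrix, an eigenvalue with a
positive eigenvector bounds every eigenvalue in absolute value (compare an eigenvector `x` with `w`
at an index maximising `|xᵢ| / wᵢ`), so `1 + s` is the largest eigenvalue.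
-/

open SimpleGraph

/-- The spectral radius of a graph: the largest eigenvalue of its adjacency matrix. -/
noncomputable def adjSpecRad {V : Type*} [Fintype V] [DecidableEq V] (G : SimpleGraph V) : ℝ :=
  letI := Classical.decRel G.Adj
  ⨆ i, (Matrix.IsHermitian.eigenvalues
    (by
      ext i j
      simp [Matrix.conjTranspose_apply, SimpleGraph.adjMatrix, G.adj_comm i j]
      : (G.adjMatrix ℝ).IsHermitian)) i

/-- `K_1 ∨ r K_3`: vertex `0` joined to `r` disjoint triangles `{1,2,3}, {4,5,6}, …`. -/
def K1JoinTriangles (r : ℕ) : SimpleGraph (Fin (3 * r + 1)) where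
  Adj v w := v ≠ w ∧ (v.val = 0 ∨ w.val = 0 ∨ (v.val + 2) / 3 = (w.val + 2) / 3)
  symm := ⟨by intro v w h; exact ⟨h.1.symm, by tauto⟩⟩
  loopless := ⟨fun v h => h.1 rfl⟩

open Finset Matrix

namespace Matrix

variable {n : Type*} [Fintype n] {A : Matrix n n ℝ}

theorem abs_le_of_mulVec_eq_smul_of_pos (hA0 : ∀ i j, 0 ≤ A i j) {μ ν : ℝ} {w x : n → ℝ}
    (hw : ∀ i, 0 < w i) (hAw : A *ᵥ w = μ • w) (hx : x ≠ 0) (hAx : A *ᵥ x = ν • x) :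
    |ν| ≤ μ := by
  obtain ⟨i, -, hi⟩ := exists_max_image univ (fun j => |x j| / w j) (univ_nonempty_iff.mpr
    (Function.ne_iff.mp hx).nonempty)
  have hcross : ∀ j, |x j| * w i ≤ |x i| * w j := fun j => by
    simpa only [div_le_div_iff₀ (hw j) (hw i)] using hi j (mem_univ j)
  have hxi : 0 < |x i| := by
    obtain ⟨j, hj⟩ := Function.ne_iff.mp hx
    exact (div_pos_iff_of_pos_right (hw i)).mp <|
      (div_pos (abs_pos.mpr hj) (hw j)).trans_le (hi j (mem_univ j))
  have key : |ν| * |x i| * w i ≤ μ * |x i| * w i :=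
    calc |ν| * |x i| * w i = |(A *ᵥ x) i| * w i := by simp [hAx, abs_mul]
      _ ≤ (∑ j, A i j * |x j|) * w i := by
        gcongr ?_ * _
        · exact (hw i).le
        simpa [mulVec, dotProduct, abs_mul, abs_of_nonneg (hA0 i _)] using
          abs_sum_le_sum_abs (fun j => A i j * x j) univ
      _ ≤ ∑ j, A i j * (|x i| * w j) := by
        rw [sum_mul]
        refine sum_le_sum fun j _ => ?_
        rw [mul_assoc]
        exact mul_le_mul_of_nonneg_left (hcross j) (hA0 i j)
      _ = μ * |x i| * w i := by
        simp_rw [mul_left_comm _ |x i|, ← mul_sum]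
        rw [show ∑ j, A i j * w j = (A *ᵥ w) i from rfl, hAw]
        simp only [Pi.smul_apply, smul_eq_mul]; ring
  exact le_of_mul_le_mul_right (le_of_mul_le_mul_right key (hw i)) hxi

theorem mem_spectrum_of_mulVec_eq_smul [DecidableEq n] {μ : ℝ} {w : n → ℝ} (hw : w ≠ 0)
    (hAw : A *ᵥ w = μ • w) : μ ∈ spectrum ℝ A := by
  rw [← spectrum_toLin']
  exact Module.End.hasEigenvalue_of_hasEigenvector
    ⟨Module.End.mem_eigenspace_iff.mpr (by rwa [toLin'_apply]), hw⟩ |>.mem_spectrum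

theorem IsHermitian.iSup_eigenvalues_eq_of_pos_eigenvector [DecidableEq n] [Nonempty n]
    (hA : A.IsHermitian) (hA0 : ∀ i j, 0 ≤ A i j) {μ : ℝ} {w : n → ℝ}
    (hw : ∀ i, 0 < w i) (hAw : A *ᵥ w = μ • w) :
    ⨆ i, hA.eigenvalues i = μ := by
  apply le_antisymm
  · refine ciSup_le fun i => (le_abs_self _).trans <|
      abs_le_of_mulVec_eq_smul_of_pos hA0 hw hAw ?_ (hA.mulVec_eigenvectorBasis i)
    exact fun h => hA.eigenvectorBasis.orthonormal.ne_zero i (WithLp.ofLp_injective 2 h)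
  · have hμ : μ ∈ Set.range hA.eigenvalues := by
      rw [← hA.spectrum_real_eq_range_eigenvalues]
      exact mem_spectrum_of_mulVec_eq_smul
        (fun h => (hw (Classical.arbitrary _)).ne' (congrFun h _)) hAw
    obtain ⟨j, rfl⟩ := hμ
    exact le_ciSup (Set.finite_range _).bddAbove j

end Matrix

theorem SimpleGraph.adjMatrix_apply_nonneg {V α : Type*} [Zero α] [One α] [Preorder α]
    [ZeroLEOneClass α] {G : SimpleGraph V} [DecidableRel G.Adj] (v w : V) :
    0 ≤ G.adjMatrix α v w := by
  rw [adjMatrix_apply]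
  split_ifs
  exacts [zero_le_one, le_rfl]

namespace K1JoinTriangles

variable {r : ℕ}

theorem adj_iff {v w : Fin (3 * r + 1)} : (K1JoinTriangles r).Adj v w ↔
    v ≠ w ∧ (v.val = 0 ∨ w.val = 0 ∨ (v.val + 2) / 3 = (w.val + 2) / 3) :=
  Iff.rfl

theorem adj_zero_iff {v : Fin (3 * r + 1)} : (K1JoinTriangles r).Adj 0 v ↔ v ≠ 0 := by
  simp [adj_iff, eq_comm]

variable [DecidableRel (K1JoinTriangles r).Adj]

theorem degree_zero : (K1JoinTriangles r).degree 0 = 3 * r := by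
  have : (K1JoinTriangles r).neighborFinset 0 = univ.erase 0 := by
    ext v; simp [adj_zero_iff]
  rw [← card_neighborFinset_eq_degree, this, card_erase_of_mem (mem_univ _), card_univ,
    Fintype.card_fin, Nat.add_sub_cancel]

/-- In `ℕ`, the triangle of a vertex `v ≠ 0` is `{3t-2, 3t-1, 3t}` with `t = (v + 2) / 3`. -/
theorem map_val_neighborFinset {v : Fin (3 * r + 1)} (hv : v ≠ 0) :
    ((K1JoinTriangles r).neighborFinset v).map Fin.valEmbedding =
      ({0, 3 * ((v.val + 2) / 3) - 2, 3 * ((v.val + 2) / 3) - 1, 3 * ((v.val + 2) / 3)} :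
        Finset ℕ).erase v.val := by
  have hv' : v.val ≠ 0 := Fin.val_ne_zero_iff.mpr hv
  have hlt := v.isLt
  ext u
  simp only [mem_map, mem_neighborFinset, Fin.valEmbedding_apply, mem_erase, mem_insert,
    mem_singleton, adj_iff]
  constructor
  · rintro ⟨w, ⟨hvw, hw⟩, rfl⟩
    have := Fin.val_ne_iff.mpr hvw
    have := w.isLt
    omega
  · intro hu
    refine ⟨⟨u, by omega⟩, ⟨fun h => hu.1 (congrArg Fin.val h).symm, ?_⟩, rfl⟩
    dsimp only
    omega

theorem degree_of_ne_zero {v : Fin (3 * r + 1)} (hv : v ≠ 0) :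
    (K1JoinTriangles r).degree v = 3 := by
  have hv' : v.val ≠ 0 := Fin.val_ne_zero_iff.mpr hv
  rw [← card_neighborFinset_eq_degree, ← card_map Fin.valEmbedding, map_val_neighborFinset hv,
    card_erase_of_mem (by simp only [mem_insert, mem_singleton]; omega),
    card_insert_of_notMem (by simp only [mem_insert, mem_singleton]; omega),
    card_insert_of_notMem (by simp only [mem_insert, mem_singleton]; omega), card_pair (by omega)]

theorem adjMatrix_mulVec_eq {s : ℝ} (hs : s ^ 2 = 3 * r + 1) :
    (K1JoinTriangles r).adjMatrix ℝ *ᵥ (fun v => if v = 0 then s - 1 else 1) =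
      (1 + s) • fun v => if v = 0 then s - 1 else 1 := by
  -- `w = 1 + (s - 2) • e₀`, so `(A *ᵥ w) v = deg v + (s - 2) [v ~ 0]`
  have hsplit : ∀ u : Fin (3 * r + 1),
      (if u = 0 then s - 1 else 1) = 1 + if u = 0 then s - 2 else 0 := fun u => by
    split_ifs <;> ring
  funext v
  simp only [adjMatrix_mulVec_apply, hsplit, sum_add_distrib, sum_const,
    card_neighborFinset_eq_degree, sum_ite_eq', mem_neighborFinset, Pi.smul_apply, smul_eq_mul,
    nsmul_eq_mul, mul_one]
  rcases eq_or_ne v 0 with rfl | hv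
  · rw [degree_zero, if_neg (SimpleGraph.irrefl _), if_pos rfl]
    push_cast
    linear_combination -hs
  · rw [degree_of_ne_zero hv, if_pos (adj_zero_iff.mpr hv).symm, if_neg hv]
    push_cast
    ring

end K1JoinTriangles

theorem specRad_K1_join_triangles (r : ℕ) (hr : 1 ≤ r) :
    adjSpecRad (K1JoinTriangles r) = 1 + Real.sqrt ((3 * r + 1 : ℕ) : ℝ) := by
  set s := Real.sqrt ((3 * r + 1 : ℕ) : ℝ)
  have hs : s ^ 2 = 3 * r + 1 := by
    rw [Real.sq_sqrt (Nat.cast_nonneg _)]; push_cast; ring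
  have hs1 : 1 < s := by
    rw [Real.lt_sqrt zero_le_one]; norm_cast; omega
  classical
  rw [adjSpecRad]
  refine Matrix.IsHermitian.iSup_eigenvalues_eq_of_pos_eigenvector _ adjMatrix_apply_nonneg
    (fun v => ?_) (K1JoinTriangles.adjMatrix_mulVec_eq hs)
  split_ifs <;> linarith
end

section
/- For n ≥ 9 with n ≡ 0 (mod 3), the spectral radius of K_1 ∨ (K_2 ∪ ((n-3)/3)K_3) is strictly less than sqrt(3(n-3)). -/
open SimpleGraph

/-- `K_1 ∨ (K_2 ∪ k K_3)` on `Fin n` (for `n ≡ 0 mod 3`): vertex `0` joined to the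
edge `{1,2}` and the disjoint triangles `{3,4,5}, {6,7,8}, …`. -/
def K1JoinK2Triangles (n : ℕ) : SimpleGraph (Fin n) where
  Adj v w := v ≠ w ∧ (v.val = 0 ∨ w.val = 0 ∨ v.val / 3 = w.val / 3)
  symm := ⟨by intro v w h; exact ⟨h.1.symm, by tauto⟩⟩
  loopless := ⟨fun v h => h.1 rfl⟩

/-!
A Collatz–Wielandt bound: if a nonnegative matrix `A` and a positive vector `x` satisfy
`A x ≤ t x` entrywise, then every real eigenvalue has absolute value at most `t` (compare an
eigenvector `v` with the least multiple of `x` dominating `|v|`). For the graph take `x` equal to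
`√n - 1` at the apex and `1` elsewhere: a non-apex vertex has at most two neighbours besides the
apex, so its row sum is at most `√n + 1`, and the apex row sum is `n - 1 = (√n + 1)(√n - 1)`.
Hence the spectral radius is at most `1 + √n`, which is below `√(3(n - 3))` once `n ≥ 9`.
-/

open Finset Matrix

namespace Matrix

variable {ι : Type*} [Fintype ι]

theorem abs_le_of_mulVec_eq_smul_of_mulVec_le {A : Matrix ι ι ℝ} (hA : ∀ i j, 0 ≤ A i j)
    {x : ι → ℝ} (hx : ∀ i, 0 < x i) {t : ℝ} (hAx : ∀ i, (A *ᵥ x) i ≤ t * x i)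
    {μ : ℝ} {v : ι → ℝ} (hv : v ≠ 0) (hμ : A *ᵥ v = μ • v) : |μ| ≤ t := by
  obtain ⟨j₀, hj₀⟩ := Function.ne_iff.mp hv
  have : Nonempty ι := ⟨j₀⟩
  -- `c` is the least constant with `|v| ≤ c • x`.
  obtain ⟨i, hi⟩ := Finite.exists_max fun j => |v j| / x j
  set c := |v i| / x i
  have hvx : ∀ j, |v j| ≤ c * x j := fun j => (div_le_iff₀ (hx j)).mp (hi j)
  have hc : 0 < c := (div_pos (abs_pos.mpr hj₀) (hx j₀)).trans_le (hi j₀)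
  have hvi : |v i| = c * x i := (div_mul_cancel₀ _ (hx i).ne').symm
  have key : |μ| * (c * x i) ≤ t * (c * x i) :=
    calc |μ| * (c * x i) = |(A *ᵥ v) i| := by
          rw [hμ, Pi.smul_apply, smul_eq_mul, abs_mul, hvi]
      _ ≤ ∑ j, A i j * |v j| := by
          simpa only [mulVec, dotProduct, abs_mul, abs_of_nonneg (hA _ _)] using
            abs_sum_le_sum_abs (fun j => A i j * v j) univ
      _ ≤ ∑ j, A i j * (c * x j) := by gcongr with j _; exacts [hA i j, hvx j]
      _ = c * (A *ᵥ x) i := by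
          simp only [mulVec, dotProduct, mul_sum]
          exact sum_congr rfl fun j _ => by ring
      _ ≤ t * (c * x i) := by nlinarith [hAx i]
  exact le_of_mul_le_mul_right key (mul_pos hc (hx i))

end Matrix

namespace SimpleGraph

variable {V : Type*} [Fintype V] [DecidableEq V] (G : SimpleGraph V) [DecidableRel G.Adj]

theorem adjSpecRad_le_of_sum_neighborFinset_le [Nonempty V] {x : V → ℝ} (hx : ∀ v, 0 < x v)
    {t : ℝ} (hGx : ∀ v, ∑ u ∈ G.neighborFinset v, x u ≤ t * x v) : adjSpecRad G ≤ t := by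
  have hAx : ∀ v, (G.adjMatrix ℝ *ᵥ x) v ≤ t * x v := fun v =>
    (G.adjMatrix_mulVec_apply v x).trans_le (hGx v)
  obtain rfl : ‹DecidableRel G.Adj› = Classical.decRel _ := Subsingleton.elim _ _
  refine ciSup_le fun k => (le_abs_self _).trans ?_
  refine Matrix.abs_le_of_mulVec_eq_smul_of_mulVec_le (fun i j => ?_) hx hAx
    (fun h => (Matrix.IsHermitian.eigenvectorBasis _).orthonormal.ne_zero k (by simpa using h))
    (Matrix.IsHermitian.mulVec_eigenvectorBasis _ k)
  simp only [adjMatrix_apply]; split_ifs <;> norm_num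

theorem adjSpecRad_le_of_card_neighborFinset_erase_le (c : V) {a t : ℝ} {d : ℕ} (ha : 0 < a)
    (hd : ∀ v ≠ c, #((G.neighborFinset v).erase c) ≤ d) (hat : a + d ≤ t)
    (hcard : (Fintype.card V : ℝ) - 1 ≤ t * a) : adjSpecRad G ≤ t := by
  have : Nonempty V := ⟨c⟩
  set x : V → ℝ := fun v => if v = c then a else 1
  have hx_ne : ∀ u ≠ c, x u = 1 := fun u hu => if_neg hu
  refine G.adjSpecRad_le_of_sum_neighborFinset_le (x := x) (fun v => ?_) fun v => ?_
  · by_cases hv : v = c <;> simp [x, hv, ha]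
  by_cases hv : v = c
  · subst hv
    have hdeg : (G.degree v : ℝ) ≤ Fintype.card V - 1 := by
      have := G.degree_lt_card_verts v
      rw [le_sub_iff_add_le]; exact_mod_cast this
    calc ∑ u ∈ G.neighborFinset v, x u = G.degree v := by
          rw [sum_congr rfl fun u hu =>
            hx_ne u (G.ne_of_adj ((G.mem_neighborFinset _ _).mp hu)).symm]
          simp
      _ ≤ t * x v := by simp only [x, if_pos rfl]; linarith
  · calc ∑ u ∈ G.neighborFinset v, x u ≤ ∑ u ∈ insert c ((G.neighborFinset v).erase c), x u :=
          sum_le_sum_of_subset_of_nonneg (insert_erase_subset _ _) fun u _ _ => by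
            by_cases hu : u = c <;> simp [x, hu, ha.le]
      _ = a + #((G.neighborFinset v).erase c) := by
          rw [sum_insert (notMem_erase c _),
            sum_congr rfl fun u hu => hx_ne u (ne_of_mem_erase hu)]
          simp [x]
      _ ≤ t * x v := by
          rw [hx_ne v hv, mul_one]
          exact le_trans (by gcongr; exact_mod_cast hd v hv) hat

end SimpleGraph

namespace K1JoinK2Triangles

instance (n : ℕ) : DecidableRel (K1JoinK2Triangles n).Adj := fun v w =>
  inferInstanceAs (Decidable (v ≠ w ∧ _))

theorem card_neighborFinset_erase_le_two {n : ℕ} {c v : Fin n} (hc : c.val = 0) (hv : v ≠ c) :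
    #(((K1JoinK2Triangles n).neighborFinset v).erase c) ≤ 2 := by
  have hv0 : v.val ≠ 0 := fun h => hv (Fin.ext (h.trans hc.symm))
  calc #(((K1JoinK2Triangles n).neighborFinset v).erase c)
      ≤ #((Ico (3 * (v.val / 3)) (3 * (v.val / 3) + 3)).erase v.val) := by
        refine card_le_card_of_injOn Fin.val (fun w hw => ?_) Fin.val_injective.injOn
        obtain ⟨hwc, hw⟩ := mem_erase.mp hw
        obtain ⟨hvw, hadj⟩ := (mem_neighborFinset _ _ _).mp hw
        have hw0 : w.val ≠ 0 := fun h => hwc (Fin.ext (h.trans hc.symm))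
        have := Fin.val_ne_of_ne hvw
        simp only [mem_coe, mem_erase, mem_Ico]
        omega
    _ = 2 := by
        rw [card_erase_of_mem (by simp only [mem_Ico]; omega), Nat.card_Ico]; omega

end K1JoinK2Triangles

theorem one_add_sqrt_lt_sqrt_three_mul_sub_three {x : ℝ} (hx : 9 ≤ x) :
    1 + √x < √(3 * (x - 3)) := by
  have hs : 3 ≤ √x := Real.le_sqrt_of_sq_le (by linarith)
  have hsq := Real.sq_sqrt (by linarith : 0 ≤ x)
  rw [Real.lt_sqrt (by positivity)]
  nlinarith

theorem specRad_K1_join_K2_triangles_lt_general (n : ℕ) (hn : 9 ≤ n) :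
    adjSpecRad (K1JoinK2Triangles n) < Real.sqrt (3 * ((n : ℝ) - 3)) := by
  have hn' : (9 : ℝ) ≤ n := by exact_mod_cast hn
  have hs : 3 ≤ √(n : ℝ) := Real.le_sqrt_of_sq_le (by linarith)
  refine lt_of_le_of_lt ?_ (one_add_sqrt_lt_sqrt_three_mul_sub_three hn')
  refine (K1JoinK2Triangles n).adjSpecRad_le_of_card_neighborFinset_erase_le ⟨0, by omega⟩
    (a := √n - 1) (d := 2) (by linarith)
    (fun v hv => K1JoinK2Triangles.card_neighborFinset_erase_le_two rfl hv)
    (by norm_num; linarith) ?_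
  rw [Fintype.card_fin]
  nlinarith [Real.sq_sqrt (by linarith : (0 : ℝ) ≤ n)]

theorem specRad_K1_join_K2_triangles_lt (n : ℕ) (hn : 9 ≤ n) (h3 : n % 3 = 0) :
    adjSpecRad (K1JoinK2Triangles n) < Real.sqrt (3 * ((n : ℝ) - 3)) :=
  specRad_K1_join_K2_triangles_lt_general n hn
end

section
/- For integers n ≥ 3r + 4 with r ≥ 1, the quartic polynomial f(x) = x^4 - 2x^3 + (6r - 3n + 9)x^2 + (6n - 18r - 18)x + 6nr - 18r - 18r^2 satisfies f(sqrt(3(n-3))) = 6r(4n - 12 - 3r - 3·sqrt(3n-9)) > 0. -/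
/-! With `s = √(3(n - 3))` we have `s² = 3(n - 3)`, and reducing the quartic modulo this relation
leaves `6r(4n - 12 - 3r - 3s)`. Positivity follows from `s ≤ n / 2`, the AM-GM inequality
`√(3(n - 3)) ≤ (3 + (n - 3)) / 2`, which gives `4n - 12 - 3r - 3s ≥ 3n/2 - 8 > 0` once `n ≥ 7`. -/

theorem quartic_eq_of_sq_eq {R : Type*} [CommRing R] (n r s : R) (hs : s ^ 2 = 3 * (n - 3)) :
    s ^ 4 - 2 * s ^ 3 + (6 * r - 3 * n + 9) * s ^ 2 + (6 * n - 18 * r - 18) * s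
        + 6 * n * r - 18 * r - 18 * r ^ 2
      = 6 * r * (4 * n - 12 - 3 * r - 3 * s) := by
  linear_combination (s ^ 2 + 3 * (n - 3) - 2 * s + (6 * r - 3 * n + 9)) * hs

theorem Real.sqrt_three_mul_sub_three_le_half {x : ℝ} (hx : 0 ≤ x) : √(3 * (x - 3)) ≤ x / 2 :=
  Real.sqrt_le_iff.mpr ⟨by positivity, by nlinarith [sq_nonneg (x - 6)]⟩

theorem four_mul_sub_three_mul_sqrt_pos {n r : ℝ} (hr : 1 ≤ r) (hn : 3 * r + 4 ≤ n) :
    0 < 4 * n - 12 - 3 * r - 3 * √(3 * (n - 3)) := by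
  have := Real.sqrt_three_mul_sub_three_le_half (x := n) (by linarith)
  linarith

theorem quartic_at_sqrt (n r : ℕ) (hr : 1 ≤ r) (hn : 3 * r + 4 ≤ n) :
    (Real.sqrt (3 * ((n : ℝ) - 3))) ^ 4 - 2 * (Real.sqrt (3 * ((n : ℝ) - 3))) ^ 3
        + (6 * r - 3 * (n : ℝ) + 9) * (Real.sqrt (3 * ((n : ℝ) - 3))) ^ 2
        + (6 * (n : ℝ) - 18 * r - 18) * Real.sqrt (3 * ((n : ℝ) - 3))
        + 6 * n * r - 18 * r - 18 * r ^ 2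
      = 6 * r * (4 * (n : ℝ) - 12 - 3 * r - 3 * Real.sqrt (3 * (n : ℝ) - 9)) ∧
    0 < 6 * (r : ℝ) * (4 * (n : ℝ) - 12 - 3 * r - 3 * Real.sqrt (3 * (n : ℝ) - 9)) := by
  have hr' : (1 : ℝ) ≤ r := by exact_mod_cast hr
  have hn' : 3 * (r : ℝ) + 4 ≤ n := by exact_mod_cast hn
  rw [show 3 * (n : ℝ) - 9 = 3 * ((n : ℝ) - 3) by ring]
  exact ⟨quartic_eq_of_sq_eq _ _ _ (Real.sq_sqrt (by linarith)),
    mul_pos (by positivity) (four_mul_sub_three_mul_sqrt_pos hr' hn')⟩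
end

section
/- Suppose G is a connected graph with Perron vector x (the positive unit eigenvector for the spectral radius), and u, v, w are vertices with uw not an edge, vw an edge, and x_u ≥ x_v. Then the graph G - vw + uw (obtained by deleting edge vw and adding edge uw) has spectral radius strictly larger than that of G. -/
open SimpleGraph

/-!
Let `x` be a positive eigenvector of `A(G)` for `ρ(G)` and let `G'` be the rotated graph. Since
`A(G') = A(G) + E_uw + E_wu - E_vw - E_wv`, we get `xᵀ A(G') x = ρ(G) xᵀx + 2 x_w (x_u - x_v)`,
which is at least `ρ(G) xᵀx`; on the other hand `ρ(G') - A(G')` is positive semidefinite. If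
`ρ(G') ≤ ρ(G)`, equality holds throughout, so `x` lies in the kernel of `ρ(G') - A(G')`. Comparing
row `u` of `A(G') x = ρ(G') x` with `A(G) x = ρ(G) x` gives `ρ(G') x_u = ρ(G) x_u + x_w`, which
contradicts `ρ(G') ≤ ρ(G)` as `x_w > 0`.
-/

open Matrix

namespace Matrix

open scoped MatrixOrder ComplexOrder

variable {𝕜 n : Type*} [RCLike 𝕜] [Fintype n] [DecidableEq n] {A : Matrix n n 𝕜}

theorem algebraMap_sub_mulVec {R S : Type*} [CommSemiring R] [CommRing S] [Algebra R S] (r : R)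
    (M : Matrix n n S) (x : n → S) :
    (algebraMap R (Matrix n n S) r - M) *ᵥ x = r • x - M *ᵥ x := by
  rw [Algebra.algebraMap_eq_smul_one, sub_mulVec, smul_mulVec, one_mulVec]

theorem star_dotProduct_algebraMap_sub_mulVec (r : ℝ) (x : n → 𝕜) :
    star x ⬝ᵥ (algebraMap ℝ (Matrix n n 𝕜) r - A) *ᵥ x
      = r * (star x ⬝ᵥ x) - star x ⬝ᵥ A *ᵥ x := by
  rw [algebraMap_sub_mulVec, dotProduct_sub, dotProduct_smul, RCLike.real_smul_eq_coe_mul]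

theorem IsHermitian.posSemidef_algebraMap_sub {r : ℝ} (hA : A.IsHermitian)
    (hr : ∀ i, hA.eigenvalues i ≤ r) : (algebraMap ℝ (Matrix n n 𝕜) r - A).PosSemidef := by
  refine le_iff.mp (le_algebraMap_of_spectrum_le (fun μ hμ => ?_) hA)
  obtain ⟨i, rfl⟩ := hA.spectrum_real_eq_range_eigenvalues ▸ hμ
  exact hr i

theorem IsHermitian.star_dotProduct_mulVec_le {r : ℝ} (hA : A.IsHermitian)
    (hr : ∀ i, hA.eigenvalues i ≤ r) (x : n → 𝕜) :
    star x ⬝ᵥ A *ᵥ x ≤ r * (star x ⬝ᵥ x) := by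
  have h := (hA.posSemidef_algebraMap_sub hr).dotProduct_mulVec_nonneg x
  rwa [star_dotProduct_algebraMap_sub_mulVec, sub_nonneg] at h

theorem IsHermitian.mulVec_eq_smul_of_star_dotProduct_mulVec_eq {r : ℝ} (hA : A.IsHermitian)
    (hr : ∀ i, hA.eigenvalues i ≤ r) {x : n → 𝕜}
    (hx : star x ⬝ᵥ A *ᵥ x = r * (star x ⬝ᵥ x)) : A *ᵥ x = r • x := by
  have h := (hA.posSemidef_algebraMap_sub hr).dotProduct_mulVec_zero_iff x
  rw [star_dotProduct_algebraMap_sub_mulVec, hx, sub_self, algebraMap_sub_mulVec] at h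
  exact (sub_eq_zero.mp (h.mp rfl)).symm

end Matrix

namespace SimpleGraph

variable {V : Type*} [DecidableEq V]

theorem eigenvalues_adjMatrix_le_adjSpecRad [Fintype V] (G : SimpleGraph V)
    [inst : DecidableRel G.Adj] (i : V) :
    (G.isHermitian_adjMatrix ℝ).eigenvalues i ≤ adjSpecRad G := by
  obtain rfl : inst = Classical.decRel G.Adj := Subsingleton.elim _ _
  exact le_ciSup (Set.finite_range _).bddAbove i

/-- The graph `G - vw + uw`. -/
def rotateEdge (G : SimpleGraph V) (u v w : V) : SimpleGraph V :=
  G.deleteEdges {s(v, w)} ⊔ fromEdgeSet {s(u, w)}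

section rotateEdge

variable {R : Type*} [CommRing R] (G : SimpleGraph V) [DecidableRel G.Adj] {u v w : V}
  [DecidableRel (G.rotateEdge u v w).Adj]

theorem adjMatrix_rotateEdge (huw : ¬ G.Adj u w) (hvw : G.Adj v w) (hne : u ≠ w) :
    (G.rotateEdge u v w).adjMatrix R = G.adjMatrix R + single u w 1
      + single w u 1 - single v w 1 - single w v 1 := by
  have huv : u ≠ v := fun h => huw (h ▸ hvw)
  ext a b
  simp only [adjMatrix_apply, Matrix.add_apply, Matrix.sub_apply, single_apply]
  simp only [rotateEdge, sup_adj, deleteEdges_adj, fromEdgeSet_adj, Set.mem_singleton_iff,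
    Sym2.eq_iff]
  split_ifs <;> grind [G.adj_symm, G.loopless, hvw.ne]

variable [Fintype V]

theorem dotProduct_adjMatrix_rotateEdge_mulVec (huw : ¬ G.Adj u w) (hvw : G.Adj v w)
    (hne : u ≠ w) (x : V → R) :
    x ⬝ᵥ (G.rotateEdge u v w).adjMatrix R *ᵥ x
      = x ⬝ᵥ G.adjMatrix R *ᵥ x + 2 * x w * (x u - x v) := by
  simp only [G.adjMatrix_rotateEdge huw hvw hne, sub_mulVec, add_mulVec, dotProduct_sub,
    dotProduct_add, single_mulVec_eq, dotProduct_smul, dotProduct_single_one, smul_eq_mul]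
  ring

theorem adjMatrix_rotateEdge_mulVec_apply_left (huw : ¬ G.Adj u w) (hvw : G.Adj v w)
    (hne : u ≠ w) (x : V → R) :
    ((G.rotateEdge u v w).adjMatrix R *ᵥ x) u = (G.adjMatrix R *ᵥ x) u + x w := by
  have huv : u ≠ v := fun h => huw (h ▸ hvw)
  simp [G.adjMatrix_rotateEdge huw hvw hne, sub_mulVec, add_mulVec, single_mulVec, hne, huv]

end rotateEdge

end SimpleGraph

theorem specRad_rotate_edge_general {V : Type*} [Fintype V] [DecidableEq V]
    (G : SimpleGraph V) [DecidableRel G.Adj]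
    (x : V → ℝ) (hpos : ∀ i, 0 < x i)
    (heig : (G.adjMatrix ℝ).mulVec x = adjSpecRad G • x)
    (u v w : V) (huw : ¬ G.Adj u w) (hvw : G.Adj v w) (hne : u ≠ w)
    (hxuv : x v ≤ x u) :
    adjSpecRad G < adjSpecRad (G.deleteEdges {s(v, w)} ⊔ fromEdgeSet {s(u, w)}) := by
  classical
  change adjSpecRad G < adjSpecRad (G.rotateEdge u v w)
  set A' := (G.rotateEdge u v w).adjMatrix ℝ
  have hA' : A'.IsHermitian := (G.rotateEdge u v w).isHermitian_adjMatrix ℝ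
  have hρ' := (G.rotateEdge u v w).eigenvalues_adjMatrix_le_adjSpecRad
  have hquad : x ⬝ᵥ A' *ᵥ x = adjSpecRad G * (x ⬝ᵥ x) + 2 * x w * (x u - x v) := by
    rw [G.dotProduct_adjMatrix_rotateEdge_mulVec huw hvw hne, heig, dotProduct_smul, smul_eq_mul]
  have hrow : (A' *ᵥ x) u = adjSpecRad G * x u + x w := by
    rw [G.adjMatrix_rotateEdge_mulVec_apply_left huw hvw hne, heig, Pi.smul_apply, smul_eq_mul]
  by_contra! hle
  have hrayleigh : x ⬝ᵥ A' *ᵥ x = adjSpecRad (G.rotateEdge u v w) * (x ⬝ᵥ x) := by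
    refine le_antisymm (by simpa using hA'.star_dotProduct_mulVec_le hρ' x) ?_
    have hgain : 0 ≤ 2 * x w * (x u - x v) :=
      mul_nonneg (mul_nonneg zero_le_two (hpos w).le) (sub_nonneg.mpr hxuv)
    have hxx : 0 ≤ x ⬝ᵥ x := by simpa using dotProduct_star_self_nonneg x
    linarith [mul_le_mul_of_nonneg_right hle hxx]
  have hx := hA'.mulVec_eq_smul_of_star_dotProduct_mulVec_eq hρ' (by simpa using hrayleigh)
  have hu := congrFun hx u
  rw [hrow, Pi.smul_apply, smul_eq_mul] at hu
  linarith [mul_le_mul_of_nonneg_right hle (hpos u).le, hpos w]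

theorem specRad_rotate_edge {V : Type*} [Fintype V] [DecidableEq V]
    (G : SimpleGraph V) [DecidableRel G.Adj] (hG : G.Connected)
    (x : V → ℝ) (hpos : ∀ i, 0 < x i) (hunit : ∑ i, x i ^ 2 = 1)
    (heig : (G.adjMatrix ℝ).mulVec x = adjSpecRad G • x)
    (u v w : V) (huw : ¬ G.Adj u w) (hvw : G.Adj v w) (hne : u ≠ w)
    (hxuv : x v ≤ x u) :
    adjSpecRad G < adjSpecRad (G.deleteEdges {s(v, w)} ⊔ fromEdgeSet {s(u, w)}) :=
  specRad_rotate_edge_general G x hpos heig u v w huw hvw hne hxuv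
end
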